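/- Let x ∈ V(ℤ) and suppose the Γ₀-orbit of x is contained in V(ℤ)\𝔘'. Then the set of MCG-last vertices in the Γ₀-orbit of x (points y with Δ(𝒱ⱼ(𝒱ᵢ(y))) ≥ Δ(y) for all i, j ∈ {1,2,3}) is finite; moreover, either all of these MCG-last vertices lie in 𝔗' or all lie in V(ℤ)\(𝔗' ∪ 𝔘'). -/

import Mathlib

/-- The Vieta involution in coordinate `i`:
`x ↦ Function.update x i (αᵢ − xⱼxₗ − xᵢ)` where `j = i+1`, `l = i+2` (mod 3). -/
def vAct (α : Fin 3 → ℤ) (i : Fin 3) (x : Fin 3 → ℤ) : Fin 3 → ℤ :=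
  Function.update x i (α i - x (i + 1) * x (i + 2) - x i)

/-- Membership in the integral cubic surface `V(ℤ)`. -/
def onV (α : Fin 3 → ℤ) (β : ℤ) (x : Fin 3 → ℤ) : Prop :=
  x 0 ^ 2 + x 1 ^ 2 + x 2 ^ 2 + x 0 * x 1 * x 2
    - α 0 * x 0 - α 1 * x 1 - α 2 * x 2 - β = 0

/-- The height function `Δ(x) = |x₁| + |x₂| + |x₃|`. -/
def delta (x : Fin 3 → ℤ) : ℤ := |x 0| + |x 1| + |x 2|

/-- Membership in the finite exceptional set `𝔗`. -/
def inT (α : Fin 3 → ℤ) (β : ℤ) (x : Fin 3 → ℤ) : Prop :=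
  onV α β x ∧ ∃ σ : Equiv.Perm (Fin 3),
    |x (σ 0)| ≤ 1 ∨ |x (σ 1) * x (σ 2)| ≤ max (3 * |α (σ 0)|) 4

/-- Membership in the exceptional set `𝔘`. -/
def inU (α : Fin 3 → ℤ) (β : ℤ) (x : Fin 3 → ℤ) : Prop :=
  onV α β x ∧ ¬ inT α β x ∧ ∃ σ : Equiv.Perm (Fin 3),
    |x (σ 0)| = 2 ∧ delta (vAct α (σ 1) x) ≤ delta x ∧
      delta (vAct α (σ 2) x) ≤ delta x

/-- `y` lies in the `Γ`-orbit of `x`: it is obtained from `x` by a finite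
sequence of Vieta involutions. -/
def gammaRel (α : Fin 3 → ℤ) (x y : Fin 3 → ℤ) : Prop :=
  ∃ L : List (Fin 3), y = L.foldl (fun z i => vAct α i z) x

/-- `y` lies in the `Γ₀`-orbit (mapping class group orbit) of `x`: it is
obtained from `x` by an even-length sequence of Vieta involutions. -/
def gamma0Rel (α : Fin 3 → ℤ) (x y : Fin 3 → ℤ) : Prop :=
  ∃ L : List (Fin 3), L.length % 2 = 0 ∧ y = L.foldl (fun z i => vAct α i z) x

/-- `y` is a descendent of `x`: obtained by a finite sequence of Vieta
involutions along which `Δ` is non-increasing at every step. -/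
def descendent (α : Fin 3 → ℤ) (x y : Fin 3 → ℤ) : Prop :=
  ∃ L : List (Fin 3), y = L.foldl (fun z i => vAct α i z) x ∧
    ∀ t < L.length,
      delta ((L.take (t + 1)).foldl (fun z i => vAct α i z) x) ≤
        delta ((L.take t).foldl (fun z i => vAct α i z) x)

/-- Membership in `𝔗' = {𝒱ᵢ(x), 𝒱ⱼ𝒱ᵢ(x) : x ∈ 𝔗}`. -/
def inT' (α : Fin 3 → ℤ) (β : ℤ) (x : Fin 3 → ℤ) : Prop :=
  ∃ y, inT α β y ∧
    ((∃ i, x = vAct α i y) ∨ ∃ i j, x = vAct α j (vAct α i y))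

/-- Membership in `𝔘' = {𝒱ᵢ(x), 𝒱ⱼ𝒱ᵢ(x) : x ∈ 𝔘}`. -/
def inU' (α : Fin 3 → ℤ) (β : ℤ) (x : Fin 3 → ℤ) : Prop :=
  ∃ y, inU α β y ∧
    ((∃ i, x = vAct α i y) ∨ ∃ i j, x = vAct α j (vAct α i y))

/-
Off `𝔗`, every coordinate has absolute value at least `2` and `|xⱼxₗ| > 3|αᵢ|`, so a Vieta move
`𝒱ᵢ` that does not increase `Δ` forces `|xⱼxₗ| < 3|xᵢ|`; two distinct such moves force the
third coordinate to be `±2`, i.e. a point of `𝔘`. Moreover, leaving `V(ℤ) \ 𝔗` requires shrinking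
a coordinate, hence strictly decreases `Δ`. On a `Γ`-orbit avoiding `𝔘` it follows that along a
reduced word, after the first step that does not decrease `Δ`, `Δ` strictly increases and `𝔗` is
never entered.

If some MCG-last vertex `y₀` lies outside `𝔗'`, this applied to the reduced words issuing from
`y₀` shows that the whole orbit avoids `𝔗`, so no MCG-last vertex lies in `𝔗'`. Then every local
minimum of `Δ` on the orbit is a global one, and every MCG-last vertex is a local minimum or one
move away from one; as `Δ`-balls are finite, there are finitely many MCG-last vertices. Otherwise
they all lie in the finite set `𝔗'`.
-/

section

variable {α : Fin 3 → ℤ} {β : ℤ}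

@[simp]
theorem vAct_vAct (i : Fin 3) (x : Fin 3 → ℤ) : vAct α i (vAct α i x) = x := by
  fin_cases i <;> funext k <;> fin_cases k <;> simp [vAct, Function.update]

theorem vAct_apply_self {i j l : Fin 3} (hij : i ≠ j) (hil : i ≠ l) (hjl : j ≠ l)
    (x : Fin 3 → ℤ) : vAct α i x i = α i - x j * x l - x i := by
  fin_cases i <;> fin_cases j <;> fin_cases l <;> simp [vAct] at * <;> ring

theorem onV_vAct {x : Fin 3 → ℤ} (hx : onV α β x) (i : Fin 3) : onV α β (vAct α i x) := by
  unfold onV at hx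
  fin_cases i <;> simp [onV, vAct, Function.update] <;> linear_combination hx

theorem onV.perm {x : Fin 3 → ℤ} (hx : onV α β x) (σ : Equiv.Perm (Fin 3)) :
    x (σ 0) ^ 2 + x (σ 1) ^ 2 + x (σ 2) ^ 2 + x (σ 0) * x (σ 1) * x (σ 2)
      - α (σ 0) * x (σ 0) - α (σ 1) * x (σ 1) - α (σ 2) * x (σ 2) - β = 0 := by
  have h01 : σ 0 ≠ σ 1 := σ.injective.ne (by decide)
  have h02 : σ 0 ≠ σ 2 := σ.injective.ne (by decide)
  have h12 : σ 1 ≠ σ 2 := σ.injective.ne (by decide)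
  unfold onV at hx
  generalize σ 0 = i, σ 1 = j, σ 2 = l at *
  fin_cases i <;> fin_cases j <;> fin_cases l <;> simp at * <;> linear_combination hx

theorem delta_vAct_add (i : Fin 3) (x : Fin 3 → ℤ) :
    delta (vAct α i x) + |x i| = delta x + |vAct α i x i| := by
  fin_cases i <;> simp [delta, vAct, Function.update] <;> ring

theorem abs_le_delta (x : Fin 3 → ℤ) (i : Fin 3) : |x i| ≤ delta x := by
  have := abs_nonneg (x 0); have := abs_nonneg (x 1); have := abs_nonneg (x 2)
  fin_cases i <;> simp [delta] <;> linarith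

theorem exists_perm_eq {i j l : Fin 3} (hij : i ≠ j) (hil : i ≠ l) (hjl : j ≠ l) :
    ∃ σ : Equiv.Perm (Fin 3), σ 0 = i ∧ σ 1 = j ∧ σ 2 = l := by
  revert i j l; decide

section NotInT

variable {x : Fin 3 → ℤ} (hx : onV α β x) (hT : ¬ inT α β x)
include hx hT

theorem lt_abs_of_not_inT (σ : Equiv.Perm (Fin 3)) :
    1 < |x (σ 0)| ∧ max (3 * |α (σ 0)|) 4 < |x (σ 1) * x (σ 2)| :=
  ⟨not_le.1 fun h => hT ⟨hx, σ, .inl h⟩, not_le.1 fun h => hT ⟨hx, σ, .inr h⟩⟩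

theorem one_lt_abs_of_not_inT (i : Fin 3) : 1 < |x i| := by
  simpa using (lt_abs_of_not_inT hx hT (Equiv.swap 0 i)).1

theorem not_inT_of_abs_le {y : Fin 3 → ℤ} (hxy : ∀ k, |x k| ≤ |y k|) :
    ¬ inT α β y := by
  rintro ⟨-, σ, hσ | hσ⟩
  · linarith [(lt_abs_of_not_inT hx hT σ).1, hxy (σ 0)]
  · have hprod := (lt_abs_of_not_inT hx hT σ).2
    rw [abs_mul] at hprod hσ
    nlinarith [hxy (σ 1), hxy (σ 2), abs_nonneg (x (σ 1)), abs_nonneg (y (σ 2))]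

theorem not_inT_vAct {i : Fin 3} (hi : delta x ≤ delta (vAct α i x)) :
    ¬ inT α β (vAct α i x) := by
  refine not_inT_of_abs_le hx hT fun k => ?_
  rcases eq_or_ne k i with rfl | hk
  · linarith [delta_vAct_add (α := α) k x]
  · simp [vAct, Function.update_of_ne hk]

theorem abs_mul_lt_of_delta_vAct_le {i j l : Fin 3} (hij : i ≠ j) (hil : i ≠ l) (hjl : j ≠ l)
    (hi : delta (vAct α i x) ≤ delta x) : |x j| * |x l| < 3 * |x i| := by
  have hstep := delta_vAct_add (α := α) i x
  rw [vAct_apply_self hij hil hjl] at hstep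
  obtain ⟨σ, rfl, rfl, rfl⟩ := exists_perm_eq hij hil hjl
  have hprod := (lt_abs_of_not_inT hx hT σ).2
  have htri := abs_add_three (α (σ 0)) (-(α (σ 0) - x (σ 1) * x (σ 2) - x (σ 0))) (-x (σ 0))
  rw [abs_neg, abs_neg, show α (σ 0) + -(α (σ 0) - x (σ 1) * x (σ 2) - x (σ 0)) + -x (σ 0) =
    x (σ 1) * x (σ 2) by ring] at htri
  rw [abs_mul] at hprod htri
  linarith [le_max_left (3 * |α (σ 0)|) 4]

theorem inU_of_delta_vAct_le {i j : Fin 3} (hij : i ≠ j) (hi : delta (vAct α i x) ≤ delta x)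
    (hj : delta (vAct α j x) ≤ delta x) : inU α β x := by
  obtain ⟨l, hil, hjl⟩ := (by decide : ∀ i j : Fin 3, i ≠ j → ∃ l, i ≠ l ∧ j ≠ l) i j hij
  have hli := abs_mul_lt_of_delta_vAct_le hx hT hij hil hjl hi
  have hlj := abs_mul_lt_of_delta_vAct_le hx hT hij.symm hjl hil hj
  have hl : |x l| = 2 := by
    nlinarith [one_lt_abs_of_not_inT hx hT i, one_lt_abs_of_not_inT hx hT j,
      one_lt_abs_of_not_inT hx hT l,
      mul_lt_mul'' hli hlj (by positivity) (by positivity)]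
  obtain ⟨σ, h0, h1, h2⟩ := exists_perm_eq hil.symm hjl.symm hij
  exact ⟨hx, hT, σ, by rw [h0, h1, h2]; exact ⟨hl, hi, hj⟩⟩

theorem delta_lt_delta_vAct (hU : ¬ inU α β x) {i j : Fin 3} (hij : i ≠ j)
    (hi : delta (vAct α i x) ≤ delta x) : delta x < delta (vAct α j x) :=
  lt_of_not_ge fun hj => hU (inU_of_delta_vAct_le hx hT hij hi hj)

end NotInT

theorem le_add_add_one_of_sq_le {t P Q : ℤ} (hP : 0 ≤ P) (hQ : 0 ≤ Q) (ht : 0 ≤ t)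
    (h : t ^ 2 ≤ P * t + Q) : t ≤ P + Q + 1 := by
  nlinarith

theorem mul_le_mul_abs_of_abs_le {p A : ℤ} (a : ℤ) (hp : |p| ≤ A) : p * a ≤ A * |a| :=
  (le_abs_self _).trans (by rw [abs_mul]; exact mul_le_mul_of_nonneg_right hp (abs_nonneg a))

section Cubic

variable {a b c p q r γ A : ℤ}
  (h : a ^ 2 + b ^ 2 + c ^ 2 + a * b * c - p * a - q * b - r * c - γ = 0)
  (hp : |p| ≤ A) (hq : |q| ≤ A) (hr : |r| ≤ A)
include h hp hq hr

theorem abs_add_abs_le_of_abs_le_one (ha : |a| ≤ 1) : |b| + |c| ≤ 8 * A + 4 * |γ| + 1 := by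
  have hA : 0 ≤ A := (abs_nonneg p).trans hp
  have habc : -(|b| * |c|) ≤ a * b * c := by
    have : |a * b * c| ≤ |b| * |c| := by
      rw [abs_mul, abs_mul, mul_assoc]
      exact mul_le_of_le_one_left (by positivity) ha
    linarith [neg_abs_le (a * b * c)]
  have hpa : p * a ≤ A := by
    nlinarith [mul_le_mul_abs_of_abs_le a hp]
  -- on the region `|a| ≤ 1` the quadratic part `b² + c² + abc` is positive definite
  have hbc : b ^ 2 + c ^ 2 - |b| * |c| ≤ A + A * |b| + A * |c| + |γ| := by
    nlinarith [mul_le_mul_abs_of_abs_le b hq, mul_le_mul_abs_of_abs_le c hr, le_abs_self γ,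
      sq_nonneg a]
  have := le_add_add_one_of_sq_le (t := |b| + |c|) (P := 4 * A) (Q := 4 * A + 4 * |γ|)
    (by positivity) (by positivity) (by positivity)
    (by nlinarith [sq_nonneg (|b| - |c|), sq_abs b, sq_abs c])
  linarith

theorem abs_le_of_abs_mul_le {M : ℤ} (hb : 1 < |b|) (hc : 1 < |c|) (hbc : |b * c| ≤ M) :
    |a| ≤ 2 * A * M + A + M + |γ| + 1 ∧ |b| ≤ M ∧ |c| ≤ M := by
  have hA : 0 ≤ A := (abs_nonneg p).trans hp
  rw [abs_mul] at hbc
  have hbM : |b| ≤ M := by nlinarith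
  have hcM : |c| ≤ M := by nlinarith
  have habc : -(|a| * M) ≤ a * b * c := by
    have : |a * b * c| ≤ |a| * M := by
      rw [abs_mul, abs_mul, mul_assoc]
      exact mul_le_mul_of_nonneg_left hbc (abs_nonneg a)
    linarith [neg_abs_le (a * b * c)]
  have := le_add_add_one_of_sq_le (t := |a|) (P := M + A) (Q := 2 * A * M + |γ|)
    (by linarith) (by nlinarith [abs_nonneg γ]) (abs_nonneg a)
    (by nlinarith [mul_le_mul_abs_of_abs_le a hp, mul_le_mul_abs_of_abs_le b hq,
      mul_le_mul_abs_of_abs_le c hr, le_abs_self γ, sq_abs a, sq_nonneg b, sq_nonneg c,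
      mul_le_mul_of_nonneg_left hbM hA, mul_le_mul_of_nonneg_left hcM hA])
  exact ⟨by linarith, hbM, hcM⟩

end Cubic

theorem inT.abs_le {x : Fin 3 → ℤ} (h : inT α β x) (k : Fin 3) :
    |x k| ≤ 6 * delta α ^ 2 + 12 * delta α + 4 * |β| + 5 := by
  obtain ⟨hx, σ, hσ⟩ := h
  have hα := abs_le_delta α
  have hA : 0 ≤ delta α := (abs_nonneg _).trans (hα 0)
  have hβ := abs_nonneg β
  by_cases hsmall : ∃ i, |x i| ≤ 1
  · obtain ⟨i, hi⟩ := hsmall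
    have hτ : |x (Equiv.swap 0 i 0)| ≤ 1 := by simpa using hi
    have hbc :=
      abs_add_abs_le_of_abs_le_one (onV.perm hx (Equiv.swap 0 i)) (hα _) (hα _) (hα _) hτ
    obtain ⟨n, rfl⟩ := (Equiv.swap 0 i).surjective k
    fin_cases n <;> simp only [Fin.zero_eta, Fin.mk_one, Fin.reduceFinMk] <;>
      nlinarith [abs_nonneg (x (Equiv.swap 0 i 1)), abs_nonneg (x (Equiv.swap 0 i 2))]
  · push Not at hsmall
    have hM : |x (σ 1) * x (σ 2)| ≤ 3 * delta α + 4 :=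
      (hσ.resolve_left (not_le.2 (hsmall _))).trans
        (max_le (by linarith [hα (σ 0)]) (by linarith))
    obtain ⟨ha, hb, hc⟩ := abs_le_of_abs_mul_le (onV.perm hx σ) (hα _) (hα _) (hα _)
      (hsmall _) (hsmall _) hM
    obtain ⟨n, rfl⟩ := σ.surjective k
    fin_cases n <;> simp only [Fin.zero_eta, Fin.mk_one, Fin.reduceFinMk] <;> nlinarith

theorem finite_setOf_forall_abs_le (m : ℤ) : {x : Fin 3 → ℤ | ∀ k, |x k| ≤ m}.Finite :=
  (Set.finite_Icc (fun _ => -m) (fun _ => m)).subset fun _ hx =>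
    ⟨fun k => (abs_le.1 (hx k)).1, fun k => (abs_le.1 (hx k)).2⟩

theorem finite_setOf_delta_le (m : ℤ) : {x : Fin 3 → ℤ | delta x ≤ m}.Finite :=
  (finite_setOf_forall_abs_le m).subset fun x hx k => (abs_le_delta x k).trans hx

theorem finite_setOf_inT' : {x | inT' α β x}.Finite := by
  have hT : {x | inT α β x}.Finite :=
    (finite_setOf_forall_abs_le _).subset fun _ hx => inT.abs_le hx
  refine ((Set.finite_iUnion fun i => hT.image (vAct α i)).union
    (Set.finite_iUnion fun i => Set.finite_iUnion fun j =>
      hT.image (vAct α j ∘ vAct α i))).subset ?_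
  rintro x ⟨t, ht, ⟨i, rfl⟩ | ⟨i, j, rfl⟩⟩
  · exact .inl (Set.mem_iUnion.2 ⟨i, t, ht, rfl⟩)
  · exact .inr (Set.mem_iUnion₂.2 ⟨i, j, t, ht, rfl⟩)

def vActList (α : Fin 3 → ℤ) (L : List (Fin 3)) (x : Fin 3 → ℤ) : Fin 3 → ℤ :=
  L.foldl (fun z i => vAct α i z) x

@[simp]
theorem vActList_nil (x : Fin 3 → ℤ) : vActList α [] x = x := rfl

@[simp]
theorem vActList_cons (a : Fin 3) (L : List (Fin 3)) (x : Fin 3 → ℤ) :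
    vActList α (a :: L) x = vActList α L (vAct α a x) := rfl

theorem vActList_append (L M : List (Fin 3)) (x : Fin 3 → ℤ) :
    vActList α (L ++ M) x = vActList α M (vActList α L x) :=
  List.foldl_append

@[simp]
theorem vActList_reverse (L : List (Fin 3)) (x : Fin 3 → ℤ) :
    vActList α L.reverse (vActList α L x) = x := by
  induction L generalizing x with
  | nil => rfl
  | cons a L ih => simp [vActList_append, ih]

theorem gammaRel.refl (x : Fin 3 → ℤ) : gammaRel α x x := ⟨[], rfl⟩

theorem gammaRel.symm {x y : Fin 3 → ℤ} (h : gammaRel α x y) : gammaRel α y x := by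
  obtain ⟨L, rfl⟩ : ∃ L, y = vActList α L x := h
  exact ⟨L.reverse, (vActList_reverse L x).symm⟩

theorem gammaRel.trans {x y z : Fin 3 → ℤ} (hxy : gammaRel α x y) (hyz : gammaRel α y z) :
    gammaRel α x z := by
  obtain ⟨L, rfl⟩ : ∃ L, y = vActList α L x := hxy
  obtain ⟨M, rfl⟩ : ∃ M, z = vActList α M (vActList α L x) := hyz
  exact ⟨L ++ M, (vActList_append L M x).symm⟩

theorem gammaRel_vAct (x : Fin 3 → ℤ) (i : Fin 3) : gammaRel α x (vAct α i x) := ⟨[i], rfl⟩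

theorem gamma0Rel.gammaRel {x y : Fin 3 → ℤ} (h : gamma0Rel α x y) : gammaRel α x y :=
  let ⟨L, _, hL⟩ := h; ⟨L, hL⟩

theorem onV_of_gammaRel {x y : Fin 3 → ℤ} (hx : onV α β x) (h : gammaRel α x y) :
    onV α β y := by
  obtain ⟨L, rfl⟩ : ∃ L, y = vActList α L x := h
  induction L generalizing x with
  | nil => exact hx
  | cons a L ih => exact ih (onV_vAct hx a)

theorem gammaRel.exists_isChain {x y : Fin 3 → ℤ} (h : gammaRel α x y) :
    ∃ L, List.IsChain (· ≠ ·) L ∧ y = vActList α L x := by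
  obtain ⟨L, rfl⟩ : ∃ L, y = vActList α L x := h
  induction L generalizing x with
  | nil => exact ⟨[], .nil, rfl⟩
  | cons a L ih =>
    obtain ⟨M, hM, hLM⟩ := ih (x := vAct α a x)
    rcases M with _ | ⟨b, M⟩
    · exact ⟨[a], .singleton a, hLM⟩
    · by_cases hab : a = b
      · subst hab
        exact ⟨M, hM.tail, by simpa using hLM⟩
      · exact ⟨a :: b :: M, .cons_cons hab hM, hLM⟩

/-- Past a step `a` into `q ∉ 𝔗` that did not decrease `Δ`, a reduced walk only increases `Δ`
and never enters `𝔗`. -/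
theorem delta_le_and_not_inT_vActList {q : Fin 3 → ℤ} (hq : onV α β q)
    (hU : ∀ z, gammaRel α q z → ¬ inU α β z) (hT : ¬ inT α β q) {a : Fin 3}
    (ha : delta (vAct α a q) ≤ delta q) {L : List (Fin 3)} (hL : List.IsChain (· ≠ ·) (a :: L)) :
    delta q ≤ delta (vActList α L q) ∧ ¬ inT α β (vActList α L q) := by
  induction L generalizing q a with
  | nil => exact ⟨le_rfl, hT⟩
  | cons b L ih =>
    obtain ⟨hab, hL⟩ := List.isChain_cons_cons.1 hL
    have hup : delta q < delta (vAct α b q) :=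
      delta_lt_delta_vAct hq hT (hU q (.refl q)) hab ha
    have := ih (onV_vAct hq b) (fun z hz => hU z ((gammaRel_vAct q b).trans hz))
      (not_inT_vAct hq hT hup.le) (by simpa using hup.le) hL
    exact ⟨hup.le.trans this.1, this.2⟩

def IsDeltaLocalMin (α : Fin 3 → ℤ) (u : Fin 3 → ℤ) : Prop :=
  ∀ i, delta u ≤ delta (vAct α i u)

theorem IsDeltaLocalMin.delta_le {u z : Fin 3 → ℤ} (hmin : IsDeltaLocalMin α u)
    (hu : onV α β u) (hU : ∀ z, gammaRel α u z → ¬ inU α β z)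
    (hT : ∀ i, ¬ inT α β (vAct α i u)) (hz : gammaRel α u z) : delta u ≤ delta z := by
  obtain ⟨L, hL, rfl⟩ := hz.exists_isChain
  rcases L with _ | ⟨b, L⟩
  · exact le_rfl
  · exact (hmin b).trans (delta_le_and_not_inT_vActList (onV_vAct hu b)
      (fun z hz => hU z ((gammaRel_vAct u b).trans hz)) (hT b) (by simpa using hmin b) hL).1

theorem isDeltaLocalMin_or_vAct {y : Fin 3 → ℤ}
    (hlast : ∀ i j, delta y ≤ delta (vAct α j (vAct α i y))) :
    IsDeltaLocalMin α y ∨ ∃ i, IsDeltaLocalMin α (vAct α i y) := by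
  by_cases hy : IsDeltaLocalMin α y
  · exact .inl hy
  · obtain ⟨i, hi⟩ := not_forall.1 hy
    exact .inr ⟨i, fun j => (not_le.1 hi).le.trans (hlast i j)⟩

theorem not_inT_of_not_inT' {y z : Fin 3 → ℤ} (hy : onV α β y)
    (hU : ∀ z, gammaRel α y z → ¬ inU α β z)
    (hlast : ∀ i j, delta y ≤ delta (vAct α j (vAct α i y))) (hT' : ¬ inT' α β y)
    (hz : gammaRel α y z) : ¬ inT α β z := by
  have hT₁ (a : Fin 3) : ¬ inT α β (vAct α a y) :=
    fun h => hT' ⟨_, h, .inl ⟨a, (vAct_vAct a y).symm⟩⟩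
  obtain ⟨L, hL, rfl⟩ := hz.exists_isChain
  rcases L with _ | ⟨a, _ | ⟨b, L⟩⟩
  · exact fun h => hT' ⟨y, h, .inr ⟨0, 0, (vAct_vAct 0 y).symm⟩⟩
  · exact hT₁ a
  · by_cases hya : delta y ≤ delta (vAct α a y)
    · exact (delta_le_and_not_inT_vActList (onV_vAct hy a)
        (fun z hz => hU z ((gammaRel_vAct y a).trans hz)) (hT₁ a) (by simpa using hya) hL).2
    · have hT₂ : ¬ inT α β (vAct α b (vAct α a y)) :=
        fun h => hT' ⟨_, h, .inr ⟨b, a, by simp⟩⟩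
      exact (delta_le_and_not_inT_vActList (onV_vAct (onV_vAct hy a) b)
        (fun z hz => hU z (gammaRel.trans ⟨[a, b], rfl⟩ hz)) hT₂
        (by simpa using (not_le.1 hya).le.trans (hlast a b))
        (List.isChain_cons_cons.1 hL).2).2

theorem not_inT'_of_forall_not_inT {y : Fin 3 → ℤ}
    (hT : ∀ z, gammaRel α y z → ¬ inT α β z) : ¬ inT' α β y := by
  rintro ⟨t, ht, ⟨i, rfl⟩ | ⟨i, j, rfl⟩⟩
  · exact hT t ⟨[i], by simp⟩ ht
  · exact hT t ⟨[j, i], by simp⟩ ht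

theorem not_inU_of_gammaRel {x z : Fin 3 → ℤ} (horb : ∀ y, gamma0Rel α x y → ¬ inU' α β y)
    (hz : gammaRel α x z) : ¬ inU α β z := by
  obtain ⟨L, rfl⟩ : ∃ L, z = vActList α L x := hz
  intro hU
  rcases Nat.even_or_odd L.length with he | ho
  · exact horb _ ⟨L, Nat.even_iff.1 he, rfl⟩ ⟨_, hU, .inr ⟨0, 0, (vAct_vAct 0 _).symm⟩⟩
  · obtain ⟨M, a, rfl⟩ := (List.eq_nil_or_concat L).resolve_left (by rintro rfl; simp at ho)
    rw [List.concat_eq_append] at hU ho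
    refine horb (vActList α M x) ⟨M, ?_, rfl⟩ ⟨_, hU, .inl ⟨a, ?_⟩⟩
    · rw [List.length_append, List.length_singleton, Nat.odd_iff] at ho
      omega
    · simp [vActList_append]

end

/-- If the `Γ₀`-orbit of `x` avoids `𝔘'`, then its set of MCG-last vertices
is finite, and either all of them are in `𝔗'` or all are in
`V(ℤ) \ (𝔗' ∪ 𝔘')`. -/
theorem cor_3_5 (α : Fin 3 → ℤ) (β : ℤ) (x : Fin 3 → ℤ)
    (hx : onV α β x)
    (horb : ∀ y, gamma0Rel α x y → onV α β y ∧ ¬ inU' α β y) :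
    {y | gamma0Rel α x y ∧
      ∀ i j : Fin 3, delta y ≤ delta (vAct α j (vAct α i y))}.Finite ∧
    ((∀ y, gamma0Rel α x y →
        (∀ i j : Fin 3, delta y ≤ delta (vAct α j (vAct α i y))) →
        inT' α β y) ∨
      (∀ y, gamma0Rel α x y →
        (∀ i j : Fin 3, delta y ≤ delta (vAct α j (vAct α i y))) →
        onV α β y ∧ ¬ inT' α β y ∧ ¬ inU' α β y)) := by
  have hU (z) (hz : gammaRel α x z) : ¬ inU α β z :=
    not_inU_of_gammaRel (fun y hy => (horb y hy).2) hz
  by_cases hall : ∀ y, gamma0Rel α x y →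
      (∀ i j : Fin 3, delta y ≤ delta (vAct α j (vAct α i y))) → inT' α β y
  · exact ⟨finite_setOf_inT'.subset fun y hy => hall y hy.1 hy.2, .inl hall⟩
  push Not at hall
  obtain ⟨y₀, hy₀, hlast₀, hT'₀⟩ := hall
  have hT (z) (hz : gammaRel α x z) : ¬ inT α β z :=
    not_inT_of_not_inT' (onV_of_gammaRel hx hy₀.gammaRel)
      (fun w hw => hU w (hy₀.gammaRel.trans hw)) hlast₀ hT'₀ (hy₀.gammaRel.symm.trans hz)
  have hmin_le (u) (hu : gammaRel α x u) (hmin : IsDeltaLocalMin α u) : delta u ≤ delta x :=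
    hmin.delta_le (onV_of_gammaRel hx hu) (fun w hw => hU w (hu.trans hw))
      (fun i => hT _ (hu.trans (gammaRel_vAct u i))) hu.symm
  refine ⟨((finite_setOf_delta_le (delta x)).union (Set.finite_iUnion fun i =>
      (finite_setOf_delta_le (delta x)).image (vAct α i))).subset ?_,
    .inr fun y hy _ => ⟨(horb y hy).1,
      not_inT'_of_forall_not_inT fun z hz => hT z (hy.gammaRel.trans hz), (horb y hy).2⟩⟩
  rintro y ⟨hy, hlast⟩
  rcases isDeltaLocalMin_or_vAct hlast with hmin | ⟨i, hmin⟩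
  · exact .inl (hmin_le y hy.gammaRel hmin)
  · exact .inr (Set.mem_iUnion.2 ⟨i, vAct α i y,
      hmin_le _ (hy.gammaRel.trans (gammaRel_vAct y i)) hmin, vAct_vAct i y⟩)
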